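/- arXiv:2205.12437 — 5 statements merged into one kernel-verified Lean document; each statement's English description precedes it below -/
import Mathlib

section
/- A k-regular graph G on n vertices has at least C(n,3) - (1/2)·n·k·(n-1-k) - (1/6)·n·k·(k-1) cotriangles (independent sets of size 3). -/
/-!
Count ordered triples `(a, b, c)` of distinct vertices, and call the angle at `a` mixed
when exactly one of `ab`, `ac` is an edge of `G`. A triple spanning a triangle of `G` or of `Gᶜ`
has no mixed angle and every other triple has exactly two, while a vertex `v` is the apex
of `2 d(v) (n - 1 - d(v))` ordered mixed angles. Summing over the `n (n - 1) (n - 2)`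
triples gives Goodman's identity `2 t(G) + 2 t(Gᶜ) + ∑ d(v) (n - 1 - d(v)) = 2 C(n, 3)`, and
`6 t(G) ≤ ∑ d(v) (d(v) - 1)` since an ordered triangle is in particular an ordered pair of
distinct neighbours of its first vertex.
-/

open SimpleGraph Finset

theorem Finset.sum_sum_boole_ne {α : Type*} [DecidableEq α] (s : Finset α) :
    ∑ a ∈ s, ∑ b ∈ s, (if a ≠ b then 1 else 0 : ℕ) = (#s).descFactorial 2 := by
  have row : ∀ a ∈ s, ∑ b ∈ s, (if a ≠ b then 1 else 0 : ℕ) = #s - 1 := by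
    intro a ha
    rw [sum_boole, filter_ne, card_erase_of_mem ha, Nat.cast_id]
  rw [sum_congr rfl row, sum_const, smul_eq_mul]
  simp [Nat.descFactorial_succ, mul_comm]

theorem Finset.sum_sum_sum_boole_ne {α : Type*} [DecidableEq α] (s : Finset α) :
    ∑ a ∈ s, ∑ b ∈ s, ∑ c ∈ s, (if a ≠ b ∧ a ≠ c ∧ b ≠ c then 1 else 0 : ℕ)
      = (#s).descFactorial 3 := by
  have row : ∀ a ∈ s, ∑ b ∈ s, ∑ c ∈ s, (if a ≠ b ∧ a ≠ c ∧ b ≠ c then 1 else 0 : ℕ)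
      = (#s - 1).descFactorial 2 := by
    intro a ha
    rw [← card_erase_of_mem ha, ← sum_sum_boole_ne, ← filter_ne, sum_filter]
    refine sum_congr rfl fun b _ => ?_
    rw [sum_filter]
    split_ifs with hab
    · simp only [ite_and, if_pos hab]
    · simp only [ite_and, if_neg hab, sum_const_zero]
  rw [sum_congr rfl row, sum_const, smul_eq_mul]
  simp only [Nat.descFactorial_succ, Nat.sub_sub, Nat.reduceAdd, tsub_zero, Nat.descFactorial_zero,
    mul_one]
  ring

namespace SimpleGraph

variable {V : Type*} [Fintype V]

theorem sum_boole_adj (H : SimpleGraph V) [DecidableRel H.Adj] (v : V) :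
    ∑ w, (if H.Adj v w then 1 else 0 : ℕ) = H.degree v := by
  simp [← neighborFinset_eq_filter]

variable [DecidableEq V]

theorem sum_boole_adj_adj_adj (H : SimpleGraph V) [DecidableRel H.Adj] :
    ∑ a, ∑ b, ∑ c, (if H.Adj a b ∧ H.Adj a c ∧ H.Adj b c then 1 else 0 : ℕ)
      = 6 * #(H.cliqueFinset 3) := by
  have unique_clique : ∀ a b c, (if H.Adj a b ∧ H.Adj a c ∧ H.Adj b c then 1 else 0 : ℕ)
      = ∑ t ∈ H.cliqueFinset 3,
          if a ∈ t ∧ b ∈ t ∧ c ∈ t ∧ (a ≠ b ∧ a ≠ c ∧ b ≠ c) then 1 else 0 := by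
    intro a b c
    rw [sum_boole, Nat.cast_id, eq_comm]
    split_ifs with h
    · rw [card_eq_one]
      refine ⟨{a, b, c}, ext fun t => ?_⟩
      simp only [mem_filter, mem_cliqueFinset_iff, mem_singleton]
      constructor
      · rintro ⟨ht, ha, hb, hc, hab, hac, hbc⟩
        refine (eq_of_subset_of_card_le ?_ ?_).symm
        · simp [insert_subset_iff, ha, hb, hc]
        · rw [ht.card_eq, card_eq_three.mpr ⟨a, b, c, hab, hac, hbc, rfl⟩]
      · rintro rfl
        exact ⟨is3Clique_triple_iff.mpr h, by simp, by simp, by simp, h.1.ne, h.2.1.ne, h.2.2.ne⟩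
    · rw [card_eq_zero, filter_eq_empty_iff]
      rintro t ht ⟨ha, hb, hc, hab, hac, hbc⟩
      have hclique := (mem_cliqueFinset_iff.mp ht).1
      exact h ⟨hclique ha hb hab, hclique ha hc hac, hclique hb hc hbc⟩
  simp_rw [unique_clique, sum_comm (t := H.cliqueFinset 3)]
  rw [mul_comm, ← smul_eq_mul, ← sum_const]
  refine sum_congr rfl fun t ht => ?_
  calc _ = ∑ a ∈ t, ∑ b ∈ t, ∑ c ∈ t, (if a ≠ b ∧ a ≠ c ∧ b ≠ c then 1 else 0 : ℕ) := by
        simp only [ite_and, sum_ite_irrel, sum_const_zero, sum_ite_mem, univ_inter]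
    _ = 6 := by rw [sum_sum_sum_boole_ne, (mem_cliqueFinset_iff.mp ht).card_eq]; rfl

theorem sum_boole_adj_adj_adj_le (H : SimpleGraph V) [DecidableRel H.Adj] :
    ∑ a, ∑ b, ∑ c, (if H.Adj a b ∧ H.Adj a c ∧ H.Adj b c then 1 else 0 : ℕ)
      ≤ ∑ v, (H.degree v).descFactorial 2 := by
  refine sum_le_sum fun a _ => ?_
  calc _ ≤ ∑ b, ∑ c, (if H.Adj a b ∧ H.Adj a c ∧ b ≠ c then 1 else 0 : ℕ) := by
        gcongr with b _ c _
        split_ifs with h₁ h₂ <;> first | omega | exact absurd ⟨h₁.1, h₁.2.1, h₁.2.2.ne⟩ h₂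
    _ = ∑ b ∈ H.neighborFinset a, ∑ c ∈ H.neighborFinset a, (if b ≠ c then 1 else 0) := by
        simp only [ite_and, sum_ite_irrel, sum_const_zero, ← mem_neighborFinset, sum_ite_mem,
          univ_inter]
    _ = _ := by rw [sum_sum_boole_ne, card_neighborFinset_eq_degree]

theorem sum_boole_adj_and_compl_adj (G : SimpleGraph V) [DecidableRel G.Adj] :
    ∑ a, ∑ b, ∑ c, (if G.Adj a b ∧ Gᶜ.Adj a c ∨ Gᶜ.Adj a b ∧ G.Adj a c then 1 else 0 : ℕ)
      = 2 * ∑ v, G.degree v * Gᶜ.degree v := by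
  rw [mul_sum]
  refine sum_congr rfl fun a _ => ?_
  have split : ∀ b c, (if G.Adj a b ∧ Gᶜ.Adj a c ∨ Gᶜ.Adj a b ∧ G.Adj a c then 1 else 0 : ℕ)
      = (if G.Adj a b then 1 else 0) * (if Gᶜ.Adj a c then 1 else 0)
        + (if Gᶜ.Adj a b then 1 else 0) * (if G.Adj a c then 1 else 0) := by
    intro b c
    by_cases G.Adj a b <;> by_cases G.Adj a c <;> simp [*]
  simp only [split, sum_add_distrib, ← mul_sum, ← sum_mul, sum_boole_adj]
  ring

theorem card_triangles_add_card_compl_triangles (G : SimpleGraph V) [DecidableRel G.Adj] :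
    2 * #(G.cliqueFinset 3) + 2 * #(Gᶜ.cliqueFinset 3) + ∑ v, G.degree v * Gᶜ.degree v
      = 2 * (Fintype.card V).choose 3 := by
  set mixed : V → V → V → ℕ := fun a b c =>
    if G.Adj a b ∧ Gᶜ.Adj a c ∨ Gᶜ.Adj a b ∧ G.Adj a c then 1 else 0 with hmixed
  have pointwise : ∀ a b c, 2 * (if a ≠ b ∧ a ≠ c ∧ b ≠ c then 1 else 0 : ℕ)
      = 2 * (if G.Adj a b ∧ G.Adj a c ∧ G.Adj b c then 1 else 0)
        + 2 * (if Gᶜ.Adj a b ∧ Gᶜ.Adj a c ∧ Gᶜ.Adj b c then 1 else 0)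
        + mixed a b c + mixed b a c + mixed c a b := by
    intro a b c
    obtain rfl | hab := eq_or_ne a b
    · simp +contextual [mixed]
    obtain rfl | hac := eq_or_ne a c
    · simp +contextual [mixed]
    obtain rfl | hbc := eq_or_ne b c
    · simp +contextual [mixed]
    simp only [mixed, compl_adj, G.adj_comm b a, G.adj_comm c a, G.adj_comm c b, ne_eq, hab, hac,
      hbc, hab.symm, hac.symm, hbc.symm, not_false_eq_true, true_and]
    by_cases G.Adj a b <;> by_cases G.Adj a c <;> by_cases G.Adj b c <;> simp [*]
  have mixed_bac : ∑ a, ∑ b, ∑ c, mixed b a c = ∑ a, ∑ b, ∑ c, mixed a b c := sum_comm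
  have mixed_cab : ∑ a, ∑ b, ∑ c, mixed c a b = ∑ a, ∑ b, ∑ c, mixed a b c :=
    (sum_congr rfl fun _ _ => sum_comm).trans sum_comm
  have total := sum_congr rfl fun a (_ : a ∈ univ) => sum_congr rfl fun b (_ : b ∈ univ) =>
    sum_congr rfl fun c (_ : c ∈ univ) => pointwise a b c
  simp only [sum_add_distrib, ← mul_sum, mixed_bac, mixed_cab] at total
  rw [sum_sum_sum_boole_ne, card_univ, Nat.descFactorial_eq_factorial_mul_choose,
    show Nat.factorial 3 = 6 from rfl, sum_boole_adj_adj_adj, sum_boole_adj_adj_adj, hmixed,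
    sum_boole_adj_and_compl_adj] at total
  omega

end SimpleGraph

theorem cotriangle_count_ge
    {V : Type*} [Fintype V] [DecidableEq V]
    (G : SimpleGraph V) [DecidableRel G.Adj]
    (n k : ℕ) (hn : Fintype.card V = n) (hk : G.IsRegularOfDegree k) :
    (n.choose 3 : ℚ) - (1 / 2) * n * k * ((n : ℚ) - 1 - k)
        - (1 / 6) * n * k * ((k : ℚ) - 1) ≤ ((Gᶜ.cliqueFinset 3).card : ℚ) := by
  have compl_degree : ∀ v, (Gᶜ.degree v : ℚ) = n - 1 - k := by
    intro v
    have hlt : k < n := hn ▸ hk v ▸ G.degree_lt_card_verts v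
    rw [degree_compl, hk v, hn, Nat.sub_sub, Nat.cast_sub (by omega)]
    push_cast
    ring
  have goodman : (2 * #(G.cliqueFinset 3) + 2 * #(Gᶜ.cliqueFinset 3) : ℚ)
      + n * (k * (n - 1 - k)) = 2 * n.choose 3 := by
    have := congrArg (Nat.cast : ℕ → ℚ) (card_triangles_add_card_compl_triangles G)
    push_cast at this
    simp only [hk _, compl_degree, sum_const, card_univ, hn, nsmul_eq_mul] at this
    exact this
  have triangles : (6 * #(G.cliqueFinset 3) : ℚ) ≤ n * (k * (k - 1)) := by
    have := sum_boole_adj_adj_adj_le G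
    rw [sum_boole_adj_adj_adj] at this
    simp only [hk _, sum_const, card_univ, hn, smul_eq_mul] at this
    have := (Nat.cast_le (α := ℚ)).mpr this
    push_cast [Nat.cast_descFactorial_two] at this
    linarith
  linarith
end

section
/- Let G be a k-regular graph on n vertices whose complement is clique-Helly, and let T be an independent set of three vertices of G. Then there are at least k vertices x of G such that x is adjacent in G to at least two vertices of T. -/
open SimpleGraph

/-- A maximal clique of a simple graph. -/
def IsMaxClique {V : Type*} (G : SimpleGraph V) (s : Set V) : Prop :=
  G.IsClique s ∧ ∀ t : Set V, G.IsClique t → s ⊆ t → s = t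

/-- A graph is clique-Helly if every nonempty pairwise intersecting family of
maximal cliques has a common vertex. -/
def CliqueHelly {V : Type*} (G : SimpleGraph V) : Prop :=
  ∀ F : Set (Set V), (∀ s ∈ F, IsMaxClique G s) →
    (∀ s ∈ F, ∀ t ∈ F, (s ∩ t).Nonempty) → F.Nonempty → (⋂₀ F).Nonempty

/-! In the complement `H = Gᶜ` the vertices `a, b, c` form a triangle. The maximal cliques of `H`
containing two of `a, b, c` pairwise meet, since any two pairs from a three-element set share a
vertex; by the Helly property they have a common vertex `u`. Every vertex that is `H`-adjacent to
two of `a, b, c` lies in such a clique together with `u`, so the extended triangle of `abc` in `H`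
is a cone with apex `u`. A `G`-neighbour of `u` is not in that cone, hence is `G`-adjacent to two
of `a, b, c`; and `u` has `k` of them. -/

def AtLeastTwoOf {α : Type*} (p : α → Prop) (a b c : α) : Prop :=
  (p a ∧ p b) ∨ (p a ∧ p c) ∨ (p b ∧ p c)

namespace AtLeastTwoOf

variable {α : Type*} {p q : α → Prop} {a b c : α}

theorem mono (h : AtLeastTwoOf p a b c) (ha : p a → q a) (hb : p b → q b) (hc : p c → q c) :
    AtLeastTwoOf q a b c := by
  unfold AtLeastTwoOf at *
  tauto

theorem exists_and (hp : AtLeastTwoOf p a b c) (hq : AtLeastTwoOf q a b c) :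
    ∃ x, p x ∧ q x := by
  rcases hp with ⟨pa, pb⟩ | ⟨pa, pc⟩ | ⟨pb, pc⟩ <;>
    rcases hq with ⟨qa, qb⟩ | ⟨qa, qc⟩ | ⟨qb, qc⟩ <;>
    first
      | exact ⟨a, ‹_›, ‹_›⟩
      | exact ⟨b, ‹_›, ‹_›⟩
      | exact ⟨c, ‹_›, ‹_›⟩

end AtLeastTwoOf

namespace SimpleGraph

variable {V : Type*} {G : SimpleGraph V} {a b c : V}

def extendedTriangle (G : SimpleGraph V) (a b c : V) : Set V :=
  {x | AtLeastTwoOf (G.Adj x) a b c}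

theorem IsClique.exists_isMaxClique_superset [Finite V] {s : Set V} (hs : G.IsClique s) :
    ∃ M, IsMaxClique G M ∧ s ⊆ M := by
  obtain ⟨M, ⟨hM, hsM⟩, hmax⟩ := Set.Finite.exists_maximalFor id
    {t | G.IsClique t ∧ s ⊆ t} (Set.toFinite _) ⟨s, hs, subset_rfl⟩
  exact ⟨M, ⟨hM, fun t ht hMt => hMt.antisymm (hmax ⟨ht, hsM.trans hMt⟩ hMt)⟩, hsM⟩

theorem isClique_triangle (hab : G.Adj a b) (hac : G.Adj a c) (hbc : G.Adj b c) :
    G.IsClique {a, b, c} := by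
  simp only [isClique_insert, Set.mem_insert_iff, Set.mem_singleton_iff, forall_eq_or_imp,
    forall_eq, isClique_singleton, true_and]
  exact ⟨fun _ => hbc, fun _ => hab, fun _ => hac⟩

theorem exists_isClique_of_mem_extendedTriangle (hab : G.Adj a b) (hac : G.Adj a c)
    (hbc : G.Adj b c) {v : V} (hv : v ∈ G.extendedTriangle a b c) :
    ∃ s, G.IsClique s ∧ v ∈ s ∧ AtLeastTwoOf (· ∈ s) a b c := by
  refine ⟨insert v ({a, b, c} ∩ G.neighborSet v), ?_, Set.mem_insert _ _,
    hv.mono (fun h => .inr ⟨by simp, h⟩) (fun h => .inr ⟨by simp, h⟩)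
      (fun h => .inr ⟨by simp, h⟩)⟩
  exact isClique_insert.2 ⟨(isClique_triangle hab hac hbc).subset Set.inter_subset_left,
    fun _ hx _ => hx.2⟩

theorem compl_extendedTriangle_subset (hab : Gᶜ.Adj a b) (hac : Gᶜ.Adj a c) (hbc : Gᶜ.Adj b c) :
    (G.extendedTriangle a b c)ᶜ ⊆ Gᶜ.extendedTriangle a b c := by
  intro v hv
  by_cases hva : v = a
  · subst hva; exact .inr (.inr ⟨hab, hac⟩)
  by_cases hvb : v = b
  · subst hvb; exact .inr (.inl ⟨hab.symm, hbc⟩)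
  by_cases hvc : v = c
  · subst hvc; exact .inl ⟨hac.symm, hbc.symm⟩
  simp only [Set.mem_compl_iff, extendedTriangle, AtLeastTwoOf, Set.mem_ofPred_eq,
    compl_adj] at hv ⊢
  tauto

end SimpleGraph

theorem CliqueHelly.exists_cone_extendedTriangle {V : Type*} [Finite V] {H : SimpleGraph V}
    (hH : CliqueHelly H) {a b c : V} (hab : H.Adj a b) (hac : H.Adj a c) (hbc : H.Adj b c) :
    ∃ u, ∀ v ∈ H.extendedTriangle a b c, v = u ∨ H.Adj u v := by
  set F : Set (Set V) := {M | IsMaxClique H M ∧ AtLeastTwoOf (· ∈ M) a b c}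
  obtain ⟨M₀, hM₀, habcM₀⟩ := (isClique_triangle hab hac hbc).exists_isMaxClique_superset
  have hM₀F : M₀ ∈ F := ⟨hM₀, .inl ⟨habcM₀ (by simp), habcM₀ (by simp)⟩⟩
  obtain ⟨u, hu⟩ := hH F (fun _ hM => hM.1) (fun _ hM _ hN => hM.2.exists_and hN.2) ⟨M₀, hM₀F⟩
  refine ⟨u, fun v hv => ?_⟩
  obtain ⟨s, hs, hvs, habcs⟩ := exists_isClique_of_mem_extendedTriangle hab hac hbc hv
  obtain ⟨M, hM, hsM⟩ := hs.exists_isMaxClique_superset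
  have huM : u ∈ M := hu M ⟨hM, habcs.mono (hsM ·) (hsM ·) (hsM ·)⟩
  by_cases huv : u = v
  · exact .inl huv.symm
  · exact .inr (hM.1 huM (hsM hvs) huv)

theorem cotriangle_adjacent_to_at_least_k_vertices
    {V : Type*} [Fintype V]
    (G : SimpleGraph V) [DecidableRel G.Adj] (k : ℕ) (hk : G.IsRegularOfDegree k)
    (hH : CliqueHelly Gᶜ)
    (a b c : V) (hab : a ≠ b) (hac : a ≠ c) (hbc : b ≠ c)
    (nab : ¬ G.Adj a b) (nac : ¬ G.Adj a c) (nbc : ¬ G.Adj b c) :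
    k ≤ {x : V | (G.Adj x a ∧ G.Adj x b) ∨ (G.Adj x a ∧ G.Adj x c) ∨
          (G.Adj x b ∧ G.Adj x c)}.ncard := by
  have Hab : Gᶜ.Adj a b := ⟨hab, nab⟩
  have Hac : Gᶜ.Adj a c := ⟨hac, nac⟩
  have Hbc : Gᶜ.Adj b c := ⟨hbc, nbc⟩
  obtain ⟨u, hu⟩ := hH.exists_cone_extendedTriangle Hab Hac Hbc
  have hNu : G.neighborSet u ⊆ G.extendedTriangle a b c := by
    intro x hux
    by_contra hx
    rcases hu x (compl_extendedTriangle_subset Hab Hac Hbc hx) with rfl | h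
    · exact G.irrefl hux
    · exact h.2 hux
  calc k = (G.neighborSet u).ncard := by
        rw [Set.ncard_eq_toFinset_card', Set.toFinset_card, card_neighborSet_eq_degree, hk u]
    _ ≤ _ := Set.ncard_le_ncard hNu
end

section
/- Let G be a k-regular graph on n vertices with n ≥ 4k, and let x be a vertex of G. Then the number of cotriangles T of G such that x is adjacent to at least two vertices of T is at most C(k,2)·(n-2k) + C(k,3). -/
/-!
Let `A` be the neighbourhood of `x`. A cotriangle meeting `A` in at least two vertices either lies
inside `A`, which accounts for at most `C(k,3)` of them, or meets `A` in exactly two vertices.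
Counting the latter once for each of their two vertices `u ∈ A`, the cotriangles through `u` are
determined by their second vertex `v ∈ A`, a non-neighbour of `u`, and their third vertex `w`,
outside `A ∪ N(u)`. If `u` has `d` neighbours in `A` there are `k - 1 - d` choices for `v` and
`n - 2k + d` for `w`, and `(k - 1 - d)(n - 2k + d) ≤ (k - 1)(n - 2k)` as soon as
`k - 1 ≤ n - 2k`. Summing over the `k` vertices `u` gives twice `C(k,2)(n - 2k)`.
-/

open SimpleGraph Finset

lemma Finset.card_filter_two_le_card_inter_le_choose_three_add {α : Type*} [DecidableEq α]
    {𝒮 : Finset (Finset α)} (h𝒮 : ∀ s ∈ 𝒮, #s = 3) (A : Finset α) :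
    #{s ∈ 𝒮 | 2 ≤ #(s ∩ A)} ≤ (#A).choose 3 + #{s ∈ 𝒮 | #(s ∩ A) = 2} := by
  calc #{s ∈ 𝒮 | 2 ≤ #(s ∩ A)}
      ≤ #(A.powersetCard 3 ∪ {s ∈ 𝒮 | #(s ∩ A) = 2}) := by
        refine card_le_card fun s hs ↦ ?_
        obtain ⟨hs𝒮, htwo⟩ := mem_filter.mp hs
        have hle : #(s ∩ A) ≤ #s := card_le_card inter_subset_left
        rcases (show #(s ∩ A) = 2 ∨ #(s ∩ A) = #s by have := h𝒮 s hs𝒮; omega) with h | h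
        · exact mem_union_right _ (mem_filter.mpr ⟨hs𝒮, h⟩)
        · have hsA : s ∩ A = s := eq_of_subset_of_card_le inter_subset_left h.ge
          exact mem_union_left _ (mem_powersetCard.mpr ⟨inter_eq_left.mp hsA, h𝒮 s hs𝒮⟩)
    _ ≤ _ := by
        grw [card_union_le, card_powersetCard]

lemma Finset.two_mul_card_eq_sum_card_filter_mem {α : Type*} [DecidableEq α]
    {𝒮 : Finset (Finset α)} {A : Finset α} (h𝒮 : ∀ s ∈ 𝒮, #(s ∩ A) = 2) :
    2 * #𝒮 = ∑ u ∈ A, #{s ∈ 𝒮 | u ∈ s} := by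
  calc 2 * #𝒮 = ∑ s ∈ 𝒮, #{u ∈ A | u ∈ s} := by
        rw [sum_congr rfl fun s hs ↦ by rw [filter_mem_eq_inter, inter_comm, h𝒮 s hs],
          sum_const, smul_eq_mul, mul_comm]
    _ = ∑ u ∈ A, #{s ∈ 𝒮 | u ∈ s} :=
        (sum_card_bipartiteAbove_eq_sum_card_bipartiteBelow (· ∈ ·)).symm

namespace SimpleGraph

variable {V : Type*} [Fintype V] [DecidableEq V] (G : SimpleGraph V) [DecidableRel G.Adj]

lemma card_cotriangles_inter_eq_two_mem_le {A : Finset V} {u : V} (hu : u ∈ A) :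
    #{s ∈ {s ∈ Gᶜ.cliqueFinset 3 | #(s ∩ A) = 2} | u ∈ s} ≤
      #((A \ G.neighborFinset u).erase u) * #(A ∪ G.neighborFinset u)ᶜ := by
  refine (card_le_card fun s hs ↦ ?_).trans
    ((card_image_le (f := fun p : V × V ↦ {u, p.1, p.2})).trans (card_product _ _).le)
  simp only [mem_filter, mem_cliqueFinset_iff] at hs
  obtain ⟨⟨hs3, hsA⟩, hus⟩ := hs
  have hnadj : ∀ v ∈ s, ¬G.Adj u v := fun v hv huv ↦
    ((compl_adj G u v).mp (hs3.isClique hus hv huv.ne)).2 huv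
  obtain ⟨v, hv⟩ := card_eq_one.mp <| show #((s ∩ A).erase u) = 1 by
    rw [card_erase_of_mem (mem_inter.mpr ⟨hus, hu⟩), hsA]
  obtain ⟨w, hw⟩ := card_eq_one.mp <| show #(s \ A) = 1 by
    have := card_inter_add_card_sdiff s A
    have := hs3.card_eq
    omega
  have hvs : v ≠ u ∧ v ∈ s ∧ v ∈ A := by simpa using hv.ge (mem_singleton_self v)
  have hws : w ∈ s ∧ w ∉ A := by simpa using hw.ge (mem_singleton_self w)
  refine mem_image.mpr ⟨(v, w), mem_product.mpr ⟨?_, ?_⟩, ?_⟩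
  · simp [hvs, hnadj v hvs.2.1]
  · simp [hws.2, hnadj w hws.1]
  · ext a
    have hva := Finset.ext_iff.mp hv a
    have hwa := Finset.ext_iff.mp hw a
    simp only [mem_erase, mem_inter, mem_sdiff, mem_singleton] at hva hwa
    simp only [mem_insert, mem_singleton]
    grind

lemma card_nonadj_mul_card_compl_union_le {k : ℕ} (hk : G.IsRegularOfDegree k) {A : Finset V}
    (hA : #A = k) {u : V} (hu : u ∈ A) (hkn : 3 * k ≤ Fintype.card V + 1) :
    #((A \ G.neighborFinset u).erase u) * #(A ∪ G.neighborFinset u)ᶜ ≤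
      (k - 1) * (Fintype.card V - 2 * k) := by
  have hu' : u ∈ A \ G.neighborFinset u := mem_sdiff.mpr ⟨hu, by simp⟩
  have hdeg : #(G.neighborFinset u) = k := (G.card_neighborFinset_eq_degree u).trans (hk u)
  set d := #(A ∩ G.neighborFinset u)
  set a := #((A \ G.neighborFinset u).erase u)
  have ha : a + d + 1 = k := by
    have := card_inter_add_card_sdiff A (G.neighborFinset u)
    have := card_pos.mpr ⟨u, hu'⟩
    have : a = #(A \ G.neighborFinset u) - 1 := card_erase_of_mem hu'
    omega
  have hcompl : #(A ∪ G.neighborFinset u)ᶜ = Fintype.card V - 2 * k + d := by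
    have := card_union_add_card_inter A (G.neighborFinset u)
    have := card_le_univ (A ∪ G.neighborFinset u)
    rw [card_compl]
    omega
  have ha_le : a ≤ Fintype.card V - 2 * k := by omega
  rw [hcompl, show k - 1 = a + d by omega]
  nlinarith [Nat.mul_le_mul_left d ha_le]

end SimpleGraph

theorem cotriangles_adjacent_to_vertex_le
    {V : Type*} [Fintype V] [DecidableEq V]
    (G : SimpleGraph V) [DecidableRel G.Adj]
    (n k : ℕ) (hn : Fintype.card V = n) (hk : G.IsRegularOfDegree k)
    (hnk : 4 * k ≤ n) (x : V) :
    {s : Finset V | Gᶜ.IsNClique 3 s ∧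
        2 ≤ {v : V | v ∈ s ∧ G.Adj x v}.ncard}.ncard ≤
      k.choose 2 * (n - 2 * k) + k.choose 3 := by
  subst hn
  set A := G.neighborFinset x
  have hA : #A = k := (G.card_neighborFinset_eq_degree x).trans (hk x)
  have hset : {s : Finset V | Gᶜ.IsNClique 3 s ∧ 2 ≤ {v : V | v ∈ s ∧ G.Adj x v}.ncard} =
      ↑({s ∈ Gᶜ.cliqueFinset 3 | 2 ≤ #(s ∩ A)}) := by
    ext s
    simp [A, ← Set.ncard_coe_finset, Set.inter_def]
  set 𝒯 := {s ∈ Gᶜ.cliqueFinset 3 | #(s ∩ A) = 2}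
  have h𝒯 : 2 * #𝒯 ≤ 2 * (k.choose 2 * (Fintype.card V - 2 * k)) :=
    calc 2 * #𝒯 = ∑ u ∈ A, #{s ∈ 𝒯 | u ∈ s} :=
          two_mul_card_eq_sum_card_filter_mem fun s hs ↦ (mem_filter.mp hs).2
      _ ≤ ∑ u ∈ A, (k - 1) * (Fintype.card V - 2 * k) := sum_le_sum fun u hu ↦
          (G.card_cotriangles_inter_eq_two_mem_le hu).trans
            (G.card_nonadj_mul_card_compl_union_le hk hA hu (by omega))
      _ = 2 * (k.choose 2 * (Fintype.card V - 2 * k)) := by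
          rw [sum_const, hA, smul_eq_mul, ← mul_assoc, ← mul_assoc, Nat.choose_two_right,
            Nat.mul_div_cancel' (Nat.even_mul_pred_self k).two_dvd]
  rw [hset, Set.ncard_coe_finset]
  calc #{s ∈ Gᶜ.cliqueFinset 3 | 2 ≤ #(s ∩ A)} ≤ k.choose 3 + #𝒯 := hA ▸
        card_filter_two_le_card_inter_le_choose_three_add
          (fun s hs ↦ (mem_cliqueFinset_iff.mp hs).card_eq) A
    _ ≤ k.choose 2 * (Fintype.card V - 2 * k) + k.choose 3 := by omega
end

section
/- Let G be a k-regular graph on n vertices with n ≥ 4k, let x be a vertex whose open neighborhood N(x) is an independent set, and for distinct a,b ∈ N(x) let n_{ab} be the number of common neighbors of a and b other than x. Then the number of cotriangles of G adjacent to x with exactly two vertices in N(x) equals the sum over unordered pairs {a,b} ⊆ N(x) of (n - 3k + 1 + n_{ab}). -/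
open SimpleGraph Finset

theorem cotriangles_with_two_vertices_in_neighborhood
    {V : Type*} [Fintype V] [DecidableEq V]
    (G : SimpleGraph V) [DecidableRel G.Adj]
    (n k : ℕ) (hn : Fintype.card V = n) (hk : G.IsRegularOfDegree k)
    (hnk : 4 * k ≤ n) (x : V)
    (hind : ∀ a ∈ G.neighborSet x, ∀ b ∈ G.neighborSet x, ¬ G.Adj a b) :
    ({s : Finset V | Gᶜ.IsNClique 3 s ∧
        ((s : Set V) ∩ G.neighborSet x).ncard = 2}.ncard : ℤ) =
      ∑ p ∈ (G.neighborFinset x).powersetCard 2,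
        ((n : ℤ) - 3 * k + 1 +
          ({z : V | z ≠ x ∧ ∀ a ∈ p, G.Adj a z}.ncard : ℤ)) := by
  classical
  set Nx := G.neighborFinset x with hNx
  have hmemNx : ∀ c, c ∈ Nx ↔ G.Adj x c := by
    intro c; rw [hNx, mem_neighborFinset]
  have hmemNS : ∀ c, c ∈ Nx → c ∈ G.neighborSet x := by
    intro c hc; rw [SimpleGraph.mem_neighborSet]; exact (hmemNx c).mp hc
  -- rewrite LHS set as a finset card
  have hLHS : {s : Finset V | Gᶜ.IsNClique 3 s ∧
      ((s : Set V) ∩ G.neighborSet x).ncard = 2}.ncard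
      = (univ.filter fun s : Finset V =>
          Gᶜ.IsNClique 3 s ∧ (s ∩ Nx).card = 2).card := by
    rw [← Set.ncard_coe_finset]
    congr 1
    ext s
    have hcoe : (s : Set V) ∩ G.neighborSet x = ↑(s ∩ Nx) := by
      rw [hNx, SimpleGraph.neighborFinset_def, Finset.coe_inter, Set.coe_toFinset]
    rw [Set.mem_setOf_eq, hcoe, Set.ncard_coe_finset]
    simp
  rw [hLHS]
  -- fiberwise counting
  have hmap : ∀ s ∈ (univ.filter fun s : Finset V =>
      Gᶜ.IsNClique 3 s ∧ (s ∩ Nx).card = 2), s ∩ Nx ∈ Nx.powersetCard 2 := by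
    intro s hs
    simp only [mem_filter, mem_univ, true_and] at hs
    rw [Finset.mem_powersetCard]
    exact ⟨inter_subset_right, hs.2⟩
  have hfib : (univ.filter fun s : Finset V =>
      Gᶜ.IsNClique 3 s ∧ (s ∩ Nx).card = 2).card
      = ∑ p ∈ Nx.powersetCard 2,
          ((univ.filter fun s : Finset V =>
            (Gᶜ.IsNClique 3 s ∧ (s ∩ Nx).card = 2) ∧ s ∩ Nx = p)).card := by
    rw [Finset.card_eq_sum_card_fiberwise hmap]
    refine Finset.sum_congr rfl fun p hp => ?_
    rw [Finset.filter_filter]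
  rw [hfib]
  push_cast
  refine Finset.sum_congr rfl ?_
  intro p hp
  rw [Finset.mem_powersetCard] at hp
  obtain ⟨hpsub, hpcard⟩ := hp
  obtain ⟨a, b, hab, rfl⟩ := Finset.card_eq_two.mp hpcard
  have haNx : a ∈ Nx := hpsub (by simp)
  have hbNx : b ∈ Nx := hpsub (by simp)
  have haN : G.Adj x a := (hmemNx a).mp haNx
  have hbN : G.Adj x b := (hmemNx b).mp hbNx
  have hnab : ¬ G.Adj a b := hind a (hmemNS a haNx) b (hmemNS b hbNx)
  -- the fiber over {a,b} is in bijection with the valid third vertices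
  have hfiber : ((univ.filter fun s : Finset V =>
      (Gᶜ.IsNClique 3 s ∧ (s ∩ Nx).card = 2) ∧ s ∩ Nx = {a, b})).card
      = (univ.filter fun z : V =>
          z ∉ Nx ∧ ¬ G.Adj a z ∧ ¬ G.Adj b z).card := by
    symm
    apply Finset.card_bij (fun z _ => insert z ({a, b} : Finset V))
    · intro z hz
      simp only [mem_filter, mem_univ, true_and] at hz
      obtain ⟨hzNx, hza, hzb⟩ := hz
      have hzab : z ∉ ({a, b} : Finset V) := fun h => hzNx (hpsub h)
      have hinter : insert z ({a, b} : Finset V) ∩ Nx = {a, b} := by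
        rw [Finset.insert_inter_of_notMem hzNx]
        exact Finset.inter_eq_left.mpr hpsub
      refine Finset.mem_filter.mpr ⟨mem_univ _, ⟨⟨?_, ?_⟩, ?_⟩, hinter⟩
      · intro u hu v hv huv
        simp only [Finset.coe_insert, Set.mem_insert_iff, Finset.coe_singleton,
          Set.mem_singleton_iff] at hu hv
        rw [SimpleGraph.compl_adj]
        refine ⟨huv, ?_⟩
        rcases hu with rfl | rfl | rfl <;> rcases hv with rfl | rfl | rfl <;>
          first
          | exact absurd rfl huv
          | (intro h; first
              | exact hza h | exact hzb h | exact hnab h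
              | exact hza h.symm | exact hzb h.symm | exact hnab h.symm)
      · rw [Finset.card_insert_of_notMem hzab, hpcard]
      · rw [hinter, hpcard]
    · intro z hz z' hz' h
      simp only [mem_filter, mem_univ, true_and] at hz hz'
      have hzab : z ∉ ({a, b} : Finset V) := fun hm => hz.1 (hpsub hm)
      have : z ∈ insert z' ({a, b} : Finset V) := h ▸ Finset.mem_insert_self z _
      rcases Finset.mem_insert.mp this with h' | h'
      · exact h'
      · exact absurd h' hzab
    · intro s hs
      simp only [mem_filter, mem_univ, true_and] at hs
      obtain ⟨⟨hclique, _⟩, hinter⟩ := hs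
      have hpssub : ({a, b} : Finset V) ⊆ s := hinter ▸ inter_subset_left
      have hcard3 : s.card = 3 := hclique.2
      have hsd : (s \ {a, b}).card = 1 := by
        rw [Finset.card_sdiff_of_subset hpssub, hcard3, hpcard]
      obtain ⟨z, hz⟩ := Finset.card_eq_one.mp hsd
      have hzs : z ∈ s := (Finset.mem_sdiff.mp (hz ▸ Finset.mem_singleton_self z)).1
      have hzp : z ∉ ({a, b} : Finset V) :=
        (Finset.mem_sdiff.mp (hz ▸ Finset.mem_singleton_self z)).2
      have hseq : insert z ({a, b} : Finset V) = s := by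
        rw [Finset.insert_eq, ← hz, Finset.sdiff_union_of_subset hpssub]
      have hzNx : z ∉ Nx := by
        intro hmem
        exact hzp (hinter ▸ Finset.mem_inter.mpr ⟨hzs, hmem⟩)
      have has : a ∈ s := hpssub (by simp)
      have hbs : b ∈ s := hpssub (by simp)
      have hza : ¬ G.Adj a z := by
        have := hclique.1 (Finset.mem_coe.mpr has) (Finset.mem_coe.mpr hzs)
          (fun h => hzp (by simp [h]))
        exact ((SimpleGraph.compl_adj G a z).mp this).2
      have hzb : ¬ G.Adj b z := by
        have := hclique.1 (Finset.mem_coe.mpr hbs) (Finset.mem_coe.mpr hzs)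
          (fun h => hzp (by simp [h]))
        exact ((SimpleGraph.compl_adj G b z).mp this).2
      exact ⟨z, Finset.mem_filter.mpr ⟨mem_univ _, hzNx, hza, hzb⟩, hseq⟩
  rw [hfiber]
  -- now count the valid third vertices
  have hC : {z : V | z ≠ x ∧ ∀ c ∈ ({a, b} : Finset V), G.Adj c z}.ncard
      = (univ.filter fun z : V => z ≠ x ∧ G.Adj a z ∧ G.Adj b z).card := by
    rw [← Set.ncard_coe_finset]
    congr 1
    ext z
    simp
  rw [hC]
  set C := univ.filter fun z : V => z ≠ x ∧ G.Adj a z ∧ G.Adj b z with hCdef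
  set Na := G.neighborFinset a with hNa
  set Nb := G.neighborFinset b with hNb
  have hZ : (univ.filter fun z : V => z ∉ Nx ∧ ¬ G.Adj a z ∧ ¬ G.Adj b z)
      = (Nx ∪ (Na ∪ Nb))ᶜ := by
    ext z
    simp [hNa, hNb, mem_neighborFinset, not_or]
  -- Nx is disjoint from Na ∪ Nb
  have hdisj : Disjoint Nx (Na ∪ Nb) := by
    rw [Finset.disjoint_left]
    intro c hc hmem
    rcases Finset.mem_union.mp hmem with h | h
    · rw [hNa, mem_neighborFinset] at h
      exact hind a (hmemNS a haNx) c (hmemNS c hc) h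
    · rw [hNb, mem_neighborFinset] at h
      exact hind b (hmemNS b hbNx) c (hmemNS c hc) h
  -- Na ∩ Nb = insert x C
  have hNaNb : Na ∩ Nb = insert x C := by
    ext z
    simp only [Finset.mem_inter, hNa, hNb, mem_neighborFinset, Finset.mem_insert,
      hCdef, mem_filter, mem_univ, true_and]
    constructor
    · rintro ⟨h1, h2⟩
      by_cases hzx : z = x
      · exact Or.inl hzx
      · exact Or.inr ⟨hzx, h1, h2⟩
    · rintro (rfl | ⟨_, h1, h2⟩)
      · exact ⟨haN.symm, hbN.symm⟩
      · exact ⟨h1, h2⟩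
  have hxC : x ∉ C := by simp [hCdef]
  have e1 : (Nx ∪ (Na ∪ Nb)).card + ((Nx ∪ (Na ∪ Nb))ᶜ).card = Fintype.card V :=
    Finset.card_add_card_compl _
  have e2 : (Nx ∪ (Na ∪ Nb)).card = Nx.card + (Na ∪ Nb).card :=
    Finset.card_union_of_disjoint hdisj
  have e3 : (Na ∪ Nb).card + (Na ∩ Nb).card = Na.card + Nb.card :=
    Finset.card_union_add_card_inter _ _
  have e4 : (Na ∩ Nb).card = C.card + 1 := by
    rw [hNaNb, Finset.card_insert_of_notMem hxC]
  have hkx : Nx.card = k := hk x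
  have hka : Na.card = k := hk a
  have hkb : Nb.card = k := hk b
  rw [hZ]
  omega
end

section
/- For every k ≥ 1 and n > 3k + √(2k² - k), the complement of any k-regular graph on n vertices is not clique-Helly. -/
/-!
If `Gᶜ` is clique-Helly and `a, b, c` are pairwise non-adjacent in `G`, the maximal cliques of `Gᶜ`
containing two of `a, b, c` pairwise meet, so they share a vertex `w`; then every `G`-neighbour of
`w` lies in two of the closed neighbourhoods `N[a], N[b], N[c]`. Take non-adjacent `a, b` with
`N(a) ≠ N(b)` (these exist once `n > 2k`) and let `c` range over the vertices outside
`N[a] ∪ N[b]`: double counting the edges between these `c` and `N(a) △ N(b)` gives `n ≤ 4k`,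
whereas `3k + √(2k² - k) ≥ 4k`.
-/

open SimpleGraph

open Finset

section Helly

variable {V : Type*} {H : SimpleGraph V}

theorem isMaxClique_iff_maximal {s : Set V} : IsMaxClique H s ↔ Maximal H.IsClique s :=
  ⟨fun h => ⟨h.1, fun _ ht hst => (h.2 _ ht hst).ge⟩,
    fun h => ⟨h.1, fun _ ht hst => hst.antisymm (h.2 ht hst)⟩⟩

theorem SimpleGraph.IsClique.exists_isMaxClique_superset_s9 [Finite V] {s : Set V}
    (hs : H.IsClique s) : ∃ t, IsMaxClique H t ∧ s ⊆ t := by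
  obtain ⟨t, hst, ht⟩ := Finite.exists_le_maximal hs
  exact ⟨t, isMaxClique_iff_maximal.2 ht, hst⟩

theorem exists_isMaxClique_of_triangle [Finite V] {x y u : V} (hxy : H.Adj x y)
    (hux : H.Adj u x) (huy : H.Adj u y) :
    ∃ D, IsMaxClique H D ∧ x ∈ D ∧ y ∈ D ∧ u ∈ D := by
  have : H.IsClique {x, y, u} := by
    simp only [isClique_insert, isClique_singleton, Set.mem_insert_iff, Set.mem_singleton_iff]
    grind [SimpleGraph.adj_symm]
  obtain ⟨D, hD, hsub⟩ := this.exists_isMaxClique_superset_s9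
  exact ⟨D, hD, hsub (by simp), hsub (by simp), hsub (by simp)⟩

theorem CliqueHelly.exists_eq_or_adj_of_adj_two [Finite V] (hH : CliqueHelly H) {a b c : V}
    (hab : H.Adj a b) (hac : H.Adj a c) (hbc : H.Adj b c) :
    ∃ w, ∀ u, (H.Adj u a ∧ H.Adj u b) ∨ (H.Adj u a ∧ H.Adj u c) ∨ (H.Adj u b ∧ H.Adj u c) →
      u = w ∨ H.Adj u w := by
  set F : Set (Set V) := {D | IsMaxClique H D ∧
    ((a ∈ D ∧ b ∈ D) ∨ (a ∈ D ∧ c ∈ D) ∨ (b ∈ D ∧ c ∈ D))}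
  have hF_pairwise : ∀ s ∈ F, ∀ t ∈ F, (s ∩ t).Nonempty := by
    rintro s ⟨-, hs⟩ t ⟨-, ht⟩
    rcases hs with ⟨_, _⟩ | ⟨_, _⟩ | ⟨_, _⟩ <;> rcases ht with ⟨_, _⟩ | ⟨_, _⟩ | ⟨_, _⟩ <;>
      first | exact ⟨a, ‹_›, ‹_›⟩ | exact ⟨b, ‹_›, ‹_›⟩ | exact ⟨c, ‹_›, ‹_›⟩
  obtain ⟨D₀, hD₀, ha₀, hb₀, -⟩ := exists_isMaxClique_of_triangle hab hac.symm hbc.symm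
  obtain ⟨w, hw⟩ := hH F (fun _ h => h.1) hF_pairwise ⟨D₀, hD₀, .inl ⟨ha₀, hb₀⟩⟩
  refine ⟨w, fun u hu => ?_⟩
  obtain ⟨D, hDF, huD⟩ : ∃ D ∈ F, u ∈ D := by
    rcases hu with ⟨hua, hub⟩ | ⟨hua, huc⟩ | ⟨hub, huc⟩
    · obtain ⟨D, hD, hx, hy, hu⟩ := exists_isMaxClique_of_triangle hab hua hub
      exact ⟨D, ⟨hD, .inl ⟨hx, hy⟩⟩, hu⟩
    · obtain ⟨D, hD, hx, hy, hu⟩ := exists_isMaxClique_of_triangle hac hua huc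
      exact ⟨D, ⟨hD, .inr (.inl ⟨hx, hy⟩)⟩, hu⟩
    · obtain ⟨D, hD, hx, hy, hu⟩ := exists_isMaxClique_of_triangle hbc hub huc
      exact ⟨D, ⟨hD, .inr (.inr ⟨hx, hy⟩)⟩, hu⟩
  exact or_iff_not_imp_left.2 (hDF.1.1 huD (hw D hDF))

end Helly

section Regular

variable {V : Type*} [Fintype V] [DecidableEq V] {G : SimpleGraph V} [DecidableRel G.Adj] {k : ℕ}

theorem CliqueHelly.exists_neighborFinset_sdiff_subset (hH : CliqueHelly Gᶜ) {a b c : V}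
    (hab : Gᶜ.Adj a b) (hac : Gᶜ.Adj a c) (hbc : Gᶜ.Adj b c) :
    ∃ w, G.neighborFinset w \ (G.neighborFinset a ∩ G.neighborFinset b) ⊆
      ((G.neighborFinset a ∪ G.neighborFinset b) \ (G.neighborFinset a ∩ G.neighborFinset b)) ∩
        G.neighborFinset c := by
  obtain ⟨w, hw⟩ := hH.exists_eq_or_adj_of_adj_two hab hac hbc
  refine ⟨w, fun u hu => ?_⟩
  have hwu := hw u
  simp only [compl_adj, mem_sdiff, mem_inter, mem_union, mem_neighborFinset]
    at hu hwu hab hac hbc ⊢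
  grind [SimpleGraph.adj_symm, SimpleGraph.Adj.ne]

namespace SimpleGraph

theorem IsRegularOfDegree.exists_compl_adj_neighborFinset_ne (hreg : G.IsRegularOfDegree k)
    (hk : 1 ≤ k) (hn : 2 * k < Fintype.card V) :
    ∃ a b, Gᶜ.Adj a b ∧ G.neighborFinset a ≠ G.neighborFinset b := by
  by_contra! h
  obtain ⟨a⟩ : Nonempty V := Fintype.card_pos_iff.1 (by omega)
  obtain ⟨u, hu⟩ : (G.neighborFinset a).Nonempty :=
    card_pos.1 (by rw [card_neighborFinset_eq_degree, hreg a]; omega)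
  -- every vertex outside `N(a)` is `a` or a non-neighbour of `a`, hence shares `N(a) ∋ u`
  have hsub : (G.neighborFinset a)ᶜ ⊆ G.neighborFinset u := by
    intro c hc
    rw [mem_compl, mem_neighborFinset] at hc
    rw [mem_neighborFinset, G.adj_comm, ← mem_neighborFinset]
    obtain rfl | hca := eq_or_ne c a
    · exact hu
    · exact h a c ((compl_adj G a c).2 ⟨hca.symm, hc⟩) ▸ hu
  have := card_le_card hsub
  rw [card_compl, card_neighborFinset_eq_degree, card_neighborFinset_eq_degree, hreg a,
    hreg u] at this
  omega

/-- With `I = N(a) ∩ N(b)` and `U = (N(a) ∪ N(b)) \ I`, every vertex `c` outside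
`N[a] ∪ N[b]` has at least `k - |I|` neighbours in `U`, while every vertex of `U` has at most
`k - 1` neighbours outside `N[a] ∪ N[b]`; double counting the edges between them bounds the
number of such `c` by `2(k - 1)`. -/
theorem IsRegularOfDegree.card_le_of_compl_cliqueHelly (hreg : G.IsRegularOfDegree k)
    (hH : CliqueHelly Gᶜ) {a b : V} (hab : Gᶜ.Adj a b)
    (hN : G.neighborFinset a ≠ G.neighborFinset b) : Fintype.card V ≤ 4 * k := by
  set A := G.neighborFinset a
  set B := G.neighborFinset b
  set I := A ∩ B
  set U := (A ∪ B) \ I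
  set C := univ \ insert a (insert b (A ∪ B))
  have hdeg (v : V) : #(G.neighborFinset v) = k := by rw [card_neighborFinset_eq_degree, hreg v]
  have hAB : #(A ∪ B) + #I = 2 * k := by rw [card_union_add_card_inter, hdeg, hdeg, two_mul]
  have hI : #I < k := by
    by_contra! hle
    have hIA : I = A := eq_of_subset_of_card_le inter_subset_left (hdeg a ▸ hle)
    exact hN (eq_of_subset_of_card_le (inter_eq_left.1 hIA) (by rw [hdeg, hdeg]))
  have hU : #U + #I = #(A ∪ B) := card_sdiff_add_card_eq_card inter_subset_union
  have hC : Fintype.card V - (#(A ∪ B) + 2) ≤ #C := by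
    have hcompl : #(univ : Finset V) - #(insert a (insert b (A ∪ B))) ≤ #C := le_card_sdiff _ _
    have hins := (card_insert_le a _).trans (Nat.succ_le_succ (card_insert_le b (A ∪ B)))
    rw [card_univ] at hcompl
    omega
  have hCU : ∀ c ∈ C, k - #I ≤ #(U.bipartiteAbove G.Adj c) := by
    intro c hc
    simp only [C, mem_sdiff, mem_univ, true_and, mem_insert, mem_union, A, B,
      mem_neighborFinset, not_or] at hc
    obtain ⟨w, hw⟩ := hH.exists_neighborFinset_sdiff_subset hab
      ((compl_adj G a c).2 ⟨Ne.symm hc.1, hc.2.2.1⟩)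
      ((compl_adj G b c).2 ⟨Ne.symm hc.2.1, hc.2.2.2⟩)
    have hUc : U ∩ G.neighborFinset c = U.bipartiteAbove G.Adj c := by
      ext; simp [bipartiteAbove]
    calc k - #I = #(G.neighborFinset w) - #I := by rw [hdeg]
      _ ≤ #(G.neighborFinset w \ I) := le_card_sdiff _ _
      _ ≤ #(U.bipartiteAbove G.Adj c) := hUc ▸ card_le_card hw
  have hUC : ∀ u ∈ U, #(C.bipartiteBelow G.Adj u) ≤ k - 1 := by
    intro u hu
    obtain ⟨x, hxu, hxC⟩ : ∃ x, G.Adj x u ∧ x ∉ C := by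
      simp only [U, mem_sdiff, mem_union, A, B, mem_neighborFinset] at hu
      rcases hu.1 with hau | hbu
      · exact ⟨a, hau, by simp [C]⟩
      · exact ⟨b, hbu, by simp [C]⟩
    have hsub : C.bipartiteBelow G.Adj u ⊂ G.neighborFinset u := by
      refine (ssubset_iff_of_subset fun y hy => ?_).2 ⟨x, ?_, ?_⟩
      · simpa [bipartiteBelow, G.adj_comm u] using (mem_filter.1 hy).2
      · simpa [G.adj_comm u] using hxu
      · simp [bipartiteBelow, hxC]
    have := card_lt_card hsub
    rw [hdeg] at this
    omega
  have hcount := card_mul_le_card_mul _ hCU hUC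
  have : #C ≤ 2 * (k - 1) := by
    refine Nat.le_of_mul_le_mul_right (c := k - #I) ?_ (by omega)
    calc #C * (k - #I) ≤ #U * (k - 1) := hcount
      _ = 2 * (k - 1) * (k - #I) := by rw [show #U = 2 * (k - #I) by omega]; ring
  omega

end SimpleGraph

end Regular

theorem main_theorem_not_helly
    (k n : ℕ) (hk : 1 ≤ k)
    (hn : (n : ℝ) > 3 * k + Real.sqrt (2 * k ^ 2 - k))
    {V : Type*} [Fintype V] (G : SimpleGraph V) [DecidableRel G.Adj]
    (hcard : Fintype.card V = n) (hreg : G.IsRegularOfDegree k) :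
    ¬ CliqueHelly Gᶜ := by
  classical
  intro hH
  have hkR : (1 : ℝ) ≤ k := by exact_mod_cast hk
  have hsqrt : (k : ℝ) ≤ Real.sqrt (2 * k ^ 2 - k) := Real.le_sqrt_of_sq_le (by nlinarith)
  have h4k : 4 * k < n := by exact_mod_cast (show (4 * k : ℝ) < n by linarith)
  obtain ⟨a, b, hab, hN⟩ := hreg.exists_compl_adj_neighborFinset_ne hk (by omega)
  have := hreg.card_le_of_compl_cliqueHelly hH hab hN
  omega
end
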